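/- Let U, Ũ ⊆ ℝⁿ be open sets with the closure of U compact and contained in Ũ, let Ǧ : Ũ × ℝⁿ → ℝ be a smooth family of asymmetric norms, and let F : Ũ × ℝⁿ → ℝ be a horizontally C¹ family of asymmetric norms which is strongly convex with respect to Ǧ; suppose that for each x ∈ Ũ the function α ↦ F_*(x, α)² is differentiable with gradient d_vF_*²(x, α). Then there exists a constant C₄ > 0 such that for all x₁, x₂ ∈ U and all α ∈ ℝⁿ: C₄‖d_vF_*²(x₁, α) − d_vF_*²(x₂, α)‖² ≤ F(x₁, d_vF_*²(x₂, α))² + F(x₂, d_vF_*²(x₁, α))² − F(x₁, d_vF_*²(x₁, α))² − F(x₂, d_vF_*²(x₂, α))², where ‖·‖ is the Euclidean norm. -/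

import Mathlib

open scoped RealInnerProductSpace

/-- `ℝⁿ` with the Euclidean inner product. -/
abbrev En (n : ℕ) := EuclideanSpace ℝ (Fin n)

/-- An asymmetric norm on `ℝⁿ`. -/
def IsAsymNorm {n : ℕ} (F : En n → ℝ) : Prop :=
  (∀ y, 0 ≤ F y) ∧ (∀ y, F y = 0 ↔ y = 0) ∧
  (∀ l : ℝ, 0 < l → ∀ y, F (l • y) = l * F y) ∧
  (∀ y₁ y₂, F (y₁ + y₂) ≤ F y₁ + F y₂)

/-- A horizontally `C¹` family of asymmetric norms on `Ut × ℝⁿ`: `F` is continuous,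
each `F x` is an asymmetric norm, and the partial derivative of `F` with respect to
the (horizontal) variable `x` exists everywhere and is continuous. -/
def HorizC1Family {n : ℕ} (Ut : Set (En n)) (F : En n → En n → ℝ) : Prop :=
  ContinuousOn (fun p : En n × En n => F p.1 p.2) (Ut ×ˢ Set.univ) ∧
  (∀ x ∈ Ut, IsAsymNorm (F x)) ∧
  ∃ DF : En n × En n → (En n →L[ℝ] ℝ),
    (∀ x ∈ Ut, ∀ y, HasFDerivAt (fun x' => F x' y) (DF (x, y)) x) ∧
    ContinuousOn DF (Ut ×ˢ Set.univ)

/-- The family of dual asymmetric norms `F_*(x, α) = sup {⟨α, y⟩ : F x y ≤ 1}`. -/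
noncomputable def dualNormF {n : ℕ} (F : En n → En n → ℝ) (x α : En n) : ℝ :=
  sSup ((fun y => ⟪α, y⟫) '' {y | F x y ≤ 1})

/-- A smooth family of asymmetric norms: each `G x` is an asymmetric norm and
`G` is `C^∞` on `Ut × (ℝⁿ \ {0})`. -/
def SmoothFamily {n : ℕ} (Ut : Set (En n)) (G : En n → En n → ℝ) : Prop :=
  (∀ x ∈ Ut, IsAsymNorm (G x)) ∧
  ContDiffOn ℝ (⊤ : ℕ∞) (fun p : En n × En n => G p.1 p.2) (Ut ×ˢ {y : En n | y ≠ 0})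

/-- The subdifferential of `F(x,·)²` at `y`. -/
def subdiffSqF {n : ℕ} (F : En n → En n → ℝ) (x y : En n) : Set (En n) :=
  {α | ∀ z, (F x y) ^ 2 + ⟪α, z - y⟫ ≤ (F x z) ^ 2}

/-- The family `F` is strongly convex with respect to the family `G` on `Ut`. -/
def StronglyConvexFamilyWrt {n : ℕ} (Ut : Set (En n)) (F G : En n → En n → ℝ) : Prop :=
  ∀ x ∈ Ut, ∀ y z α, α ∈ subdiffSqF F x y →
    (F x y) ^ 2 + ⟪α, z - y⟫ + (G x (z - y)) ^ 2 ≤ (F x z) ^ 2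

lemma csSup_mul_left {S : Set ℝ} (hne : S.Nonempty) (hbdd : BddAbove S) {t : ℝ} (ht : 0 < t) :
    sSup ((fun a => t * a) '' S) = t * sSup S := by
  apply IsLUB.csSup_eq _ (hne.image _)
  have h := isLUB_csSup hne hbdd
  constructor
  · rintro _ ⟨a, ha, rfl⟩
    exact mul_le_mul_of_nonneg_left (h.1 ha) ht.le
  · intro b hb
    have h2 : sSup S ≤ t⁻¹ * b := by
      apply h.2
      intro a ha
      have := hb ⟨a, ha, rfl⟩
      rw [le_inv_mul_iff₀ ht]
      exact this
    calc t * sSup S ≤ t * (t⁻¹ * b) := mul_le_mul_of_nonneg_left h2 ht.le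
      _ = b := by field_simp

lemma asym_lower {n : ℕ} (N : En n → ℝ) (hN : IsAsymNorm N) (hc : Continuous N) :
    ∃ m > (0:ℝ), ∀ y, m * ‖y‖ ≤ N y := by
  rcases subsingleton_or_nontrivial (En n) with h | h
  · refine ⟨1, one_pos, fun y => ?_⟩
    have hy : y = 0 := Subsingleton.elim y 0
    simp [hy, (hN.2.1 0).mpr rfl]
  · have hsp : (Metric.sphere (0 : En n) 1).Nonempty :=
      NormedSpace.sphere_nonempty.mpr zero_le_one
    obtain ⟨u, hu, hmin⟩ := (isCompact_sphere (0 : En n) 1).exists_isMinOn hsp hc.continuousOn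
    have hu1 : ‖u‖ = 1 := by simpa using hu
    have hune : u ≠ 0 := by intro h0; rw [h0] at hu1; simp at hu1
    have hNu : 0 < N u := lt_of_le_of_ne (hN.1 u) (fun h0 => hune ((hN.2.1 u).mp h0.symm))
    refine ⟨N u, hNu, fun y => ?_⟩
    rcases eq_or_ne y 0 with rfl | hy
    · simp [(hN.2.1 0).mpr rfl]
    · have hyn : 0 < ‖y‖ := norm_pos_iff.mpr hy
      have hv : ‖y‖⁻¹ • y ∈ Metric.sphere (0 : En n) 1 := by
        simp [norm_smul, abs_of_pos (inv_pos.mpr hyn), inv_mul_cancel₀ hyn.ne']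
      have h1 : N u ≤ N (‖y‖⁻¹ • y) := hmin hv
      have h2 : N y = ‖y‖ * N (‖y‖⁻¹ • y) := by
        rw [← hN.2.2.1 ‖y‖ hyn, smul_inv_smul₀ hyn.ne']
      rw [h2]
      calc N u * ‖y‖ = ‖y‖ * N u := mul_comm _ _
        _ ≤ ‖y‖ * N (‖y‖⁻¹ • y) := mul_le_mul_of_nonneg_left h1 hyn.le

lemma grad_subgrad {n : ℕ} {q : En n → ℝ} (hq : ConvexOn ℝ Set.univ q) {α gq : En n}
    (hg : HasGradientAt q gq α) (β : En n) : q α + ⟪gq, β - α⟫ ≤ q β := by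
  set φ : ℝ → ℝ := fun t => q (α + t • (β - α)) with hφ
  have hline : HasDerivAt (fun t : ℝ => α + t • (β - α)) (β - α) 0 := by
    simpa using ((hasDerivAt_id (0:ℝ)).smul_const (β - α)).const_add α
  have hφ' : HasDerivAt φ ⟪gq, β - α⟫ 0 := by
    have hf' : HasFDerivAt q ((InnerProductSpace.toDual ℝ (En n)) gq)
        ((fun t : ℝ => α + t • (β - α)) 0) := by
      simpa using hg.hasFDerivAt
    have := hf'.comp_hasDerivAt 0 hline
    simp [InnerProductSpace.toDual_apply_apply] at this
    exact this
  have hφconv : ConvexOn ℝ Set.univ φ := by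
    have := hq.comp_affineMap (AffineMap.lineMap α β)
    have heq : φ = q ∘ (AffineMap.lineMap α β) := by
      funext t
      simp [hφ, AffineMap.lineMap_apply]
      rw [add_comm]
    rw [heq]
    simpa using this
  have hs := hφconv.le_slope_of_hasDerivAt (Set.mem_univ 0) (Set.mem_univ (1:ℝ)) one_pos hφ'
  have hsl : slope φ 0 1 = φ 1 - φ 0 := by simp [slope_def_field]
  have h1 : φ 1 = q β := by simp [hφ]
  have h0 : φ 0 = q α := by simp [hφ]
  rw [hsl, h1, h0] at hs
  linarith

lemma key_subdiff {n : ℕ} (F : En n → En n → ℝ) (x : En n) (hN : IsAsymNorm (F x))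
    (hcont : Continuous (F x)) (α gx : En n)
    (hg : HasGradientAt (fun β => (dualNormF F x β) ^ 2) gx α) :
    α ∈ subdiffSqF F x ((4:ℝ)⁻¹ • gx) := by
  obtain ⟨m, hm, hmB⟩ := asym_lower (F x) hN hcont
  have hN0 : F x 0 = 0 := (hN.2.1 0).mpr rfl
  set S := {y : En n | F x y ≤ 1} with hSdef
  set D := fun β => dualNormF F x β with hDdef
  set q := fun β => (dualNormF F x β) ^ 2 with hqdef
  have hS0 : (0 : En n) ∈ S := by simp [hSdef, hN0]
  have hne : ∀ β : En n, ((fun y => ⟪β, y⟫) '' S).Nonempty := fun β => ⟨_, 0, hS0, rfl⟩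
  have hbdd : ∀ β : En n, BddAbove ((fun y => ⟪β, y⟫) '' S) := by
    intro β
    refine ⟨‖β‖ * m⁻¹, ?_⟩
    rintro _ ⟨y, hy, rfl⟩
    have h1 : ⟪β, y⟫ ≤ ‖β‖ * ‖y‖ := real_inner_le_norm β y
    have h2 : m * ‖y‖ ≤ 1 := le_trans (hmB y) hy
    have h3 : ‖y‖ ≤ m⁻¹ := by
      have h4 : ‖y‖ ≤ m⁻¹ * 1 := (le_inv_mul_iff₀ hm).mpr (by linarith)
      simpa using h4
    calc ⟪β, y⟫ ≤ ‖β‖ * ‖y‖ := h1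
      _ ≤ ‖β‖ * m⁻¹ := mul_le_mul_of_nonneg_left h3 (norm_nonneg β)
  have hDub : ∀ β : En n, ∀ y ∈ S, ⟪β, y⟫ ≤ D β := fun β y hy =>
    le_csSup (hbdd β) ⟨y, hy, rfl⟩
  have hD0 : ∀ β : En n, 0 ≤ D β := fun β => by
    simpa using hDub β 0 hS0
  have hFY : ∀ β z : En n, ⟪β, z⟫ ≤ D β * F x z := by
    intro β z
    rcases eq_or_lt_of_le (hN.1 z) with h0 | hpos
    · have hz0 : z = 0 := (hN.2.1 z).mp h0.symm
      simp only [hz0, inner_zero_right, hN0, mul_zero, le_refl]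
    · have hmem : (F x z)⁻¹ • z ∈ S := by
        have := hN.2.2.1 (F x z)⁻¹ (inv_pos.mpr hpos) z
        simp only [hSdef, Set.mem_setOf_eq, this, inv_mul_cancel₀ hpos.ne', le_refl]
      have h1 := hDub β _ hmem
      rw [real_inner_smul_right] at h1
      calc ⟪β, z⟫ = F x z * ((F x z)⁻¹ * ⟪β, z⟫) := by field_simp
        _ ≤ F x z * D β := mul_le_mul_of_nonneg_left h1 hpos.le
        _ = D β * F x z := mul_comm _ _
  have hDhom : ∀ t : ℝ, 0 < t → ∀ β, D (t • β) = t * D β := by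
    intro t ht β
    have himg : (fun y => ⟪t • β, y⟫) '' S = (fun a => t * a) '' ((fun y => ⟪β, y⟫) '' S) := by
      rw [← Set.image_comp]
      apply Set.image_congr
      intro y _
      show ⟪t • β, y⟫ = t * ⟪β, y⟫
      exact real_inner_smul_left β y t
    show sSup ((fun y => ⟪t • β, y⟫) '' S) = t * sSup ((fun y => ⟪β, y⟫) '' S)
    rw [himg, csSup_mul_left (hne β) (hbdd β) ht]
  have hqconv : ConvexOn ℝ Set.univ q := by
    refine ⟨convex_univ, ?_⟩
    intro β₁ _ β₂ _ a b ha hb hab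
    have h1 : D (a • β₁ + b • β₂) ≤ a * D β₁ + b * D β₂ := by
      apply csSup_le (hne _)
      rintro _ ⟨y, hy, rfl⟩
      show ⟪a • β₁ + b • β₂, y⟫ ≤ a * D β₁ + b * D β₂
      have hin : ⟪a • β₁ + b • β₂, y⟫ = a * ⟪β₁, y⟫ + b * ⟪β₂, y⟫ := by
        rw [inner_add_left, real_inner_smul_left, real_inner_smul_left]
      rw [hin]
      exact add_le_add (mul_le_mul_of_nonneg_left (hDub β₁ y hy) ha)
        (mul_le_mul_of_nonneg_left (hDub β₂ y hy) hb)
    have h2 : q (a • β₁ + b • β₂) ≤ (a * D β₁ + b * D β₂) ^ 2 := by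
      have := pow_le_pow_left₀ (hD0 _) h1 2
      simpa [hqdef, hDdef] using this
    have h3 : (a * D β₁ + b * D β₂) ^ 2 ≤ a * (D β₁) ^ 2 + b * (D β₂) ^ 2 := by
      nlinarith [mul_nonneg ha hb, sq_nonneg (D β₁ - D β₂)]
    calc q (a • β₁ + b • β₂) ≤ (a * D β₁ + b * D β₂) ^ 2 := h2
      _ ≤ a * (D β₁) ^ 2 + b * (D β₂) ^ 2 := h3
      _ = a • q β₁ + b • q β₂ := by simp only [smul_eq_mul, hqdef, hDdef]
  have hsub : ∀ β : En n, q α + ⟪gx, β - α⟫ ≤ q β := fun β => grad_subgrad hqconv hg β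
  -- ⟪gx, α⟫ = 2 * q α
  have hga : ⟪gx, α⟫ = 2 * q α := by
    set φ : ℝ → ℝ := fun t => q (t • α) with hφdef
    have hline : HasDerivAt (fun t : ℝ => t • α) α 1 := by
      simpa using (hasDerivAt_id (1:ℝ)).smul_const α
    have hf' : HasFDerivAt q ((InnerProductSpace.toDual ℝ (En n)) gx)
        ((fun t : ℝ => t • α) 1) := by simpa using hg.hasFDerivAt
    have hφ'1 : HasDerivAt φ ⟪gx, α⟫ 1 := by
      have := hf'.comp_hasDerivAt 1 hline
      simp [InnerProductSpace.toDual_apply_apply] at this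
      exact this
    have heq : φ =ᶠ[nhds (1:ℝ)] fun t => (q α) * t ^ 2 := by
      filter_upwards [Ioi_mem_nhds (zero_lt_one (α := ℝ))] with t ht
      have : D (t • α) = t * D α := hDhom t ht α
      simp only [hφdef, hqdef]
      show (dualNormF F x (t • α)) ^ 2 = (dualNormF F x α) ^ 2 * t ^ 2
      have h2 : dualNormF F x (t • α) = t * dualNormF F x α := this
      rw [h2]; ring
    have hφ'2 : HasDerivAt φ (2 * q α) 1 := by
      have hp : HasDerivAt (fun t : ℝ => (q α) * t ^ 2) (q α * (2 * 1)) 1 := by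
        have := (hasDerivAt_pow 2 (1:ℝ)).const_mul (q α)
        simpa using this
      have := hp.congr_of_eventuallyEq heq
      simpa [mul_comm] using this
    exact hφ'1.unique hφ'2
  -- F x gx ≤ 2 * D α
  have hFg : F x gx ≤ 2 * D α := by
    rcases eq_or_ne gx 0 with rfl | hgx0
    · rw [hN0]; linarith [hD0 α]
    · have H : ∀ c : ℝ, c • gx = 0 → c • (F x gx) = 0 := by
        intro c hc
        rcases smul_eq_zero.mp hc with h | h
        · simp [h]
        · exact absurd h hgx0
      set f := LinearPMap.mkSpanSingleton' (σ := RingHom.id ℝ) gx (F x gx) H with hfdef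
      have hfle : ∀ w : f.domain, f w ≤ F x w := by
        rintro ⟨w, hw⟩
        have hw' : w ∈ Submodule.span ℝ {gx} := hw
        obtain ⟨c, hc⟩ := Submodule.mem_span_singleton.mp hw'
        have hwmem : (⟨w, hw⟩ : f.domain) = ⟨c • gx, hc.symm ▸ hw⟩ := Subtype.ext hc.symm
        rw [hwmem, LinearPMap.mkSpanSingleton'_apply]
        show c • F x gx ≤ F x (c • gx)
        rcases lt_or_ge 0 c with hcpos | hcle
        · rw [hN.2.2.1 c hcpos gx, smul_eq_mul]
        · have h1 : c * F x gx ≤ 0 := mul_nonpos_of_nonpos_of_nonneg hcle (hN.1 gx)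
          have h2 : 0 ≤ F x (c • gx) := hN.1 _
          rw [smul_eq_mul]
          linarith
      obtain ⟨L, hLeq, hLle⟩ := exists_extension_of_le_sublinear f (F x)
        (fun c hc y => hN.2.2.1 c hc y) hN.2.2.2 hfle
      have hgmem : gx ∈ f.domain := by
        show gx ∈ Submodule.span ℝ {gx}
        exact Submodule.mem_span_singleton_self gx
      have hLg : L gx = F x gx := by
        have h1 := hLeq ⟨gx, hgmem⟩
        have h2 : f ⟨gx, hgmem⟩ = F x gx := LinearPMap.mkSpanSingleton'_apply_self gx (F x gx) H _
        rw [h2] at h1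
        exact h1
      set b := (InnerProductSpace.toDual ℝ (En n)).symm (LinearMap.toContinuousLinearMap L) with hbdef
      have hb : ∀ w : En n, ⟪b, w⟫ = L w := by
        intro w
        rw [hbdef]
        rw [InnerProductSpace.toDual_symm_apply]
        rfl
      have hDb : D b ≤ 1 := by
        apply csSup_le (hne b)
        rintro _ ⟨y, hy, rfl⟩
        calc ⟪b, y⟫ = L y := hb y
          _ ≤ F x y := hLle y
          _ ≤ 1 := hy
      have hineq : ∀ t : ℝ, 0 < t → t * ⟪gx, b⟫ ≤ t ^ 2 + q α := by
        intro t ht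
        have h1 := hsub (t • b)
        have h2 : q (t • b) = t ^ 2 * (D b) ^ 2 := by
          show (dualNormF F x (t • b)) ^ 2 = t ^ 2 * (dualNormF F x b) ^ 2
          rw [show dualNormF F x (t • b) = t * dualNormF F x b from hDhom t ht b]; ring
        have h3 : (D b) ^ 2 ≤ 1 := by
          have := hDb
          nlinarith [hD0 b]
        have h4 : ⟪gx, t • b - α⟫ = t * ⟪gx, b⟫ - ⟪gx, α⟫ := by
          rw [inner_sub_right, real_inner_smul_right]
        rw [h4, hga] at h1
        nlinarith [h1, h2, h3, sq_nonneg t]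
      have hgb : ⟪gx, b⟫ ≤ 2 * D α := by
        rcases eq_or_lt_of_le (hD0 α) with h0 | hpos
        · have hDa : dualNormF F x α = 0 := h0.symm
          have hq0 : q α = 0 := by
            show (dualNormF F x α) ^ 2 = 0
            rw [hDa]; ring
          by_contra hcon
          push_neg at hcon
          have hI : 0 < ⟪gx, b⟫ := by rw [← h0] at hcon; simpa using hcon
          have := hineq (⟪gx, b⟫ / 2) (by positivity)
          rw [hq0] at this
          nlinarith [this, hI]
        · have := hineq (D α) hpos
          have hqa : q α = (D α) ^ 2 := rfl
          rw [hqa] at this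
          nlinarith [this, hpos]
      calc F x gx = L gx := hLg.symm
        _ = ⟪b, gx⟫ := (hb gx).symm
        _ = ⟪gx, b⟫ := real_inner_comm gx b
        _ ≤ 2 * D α := hgb
  -- conclude
  intro z
  have hFy : F x ((4:ℝ)⁻¹ • gx) = 4⁻¹ * F x gx := hN.2.2.1 (4:ℝ)⁻¹ (by norm_num) gx
  have hinner1 : ⟪α, z - (4:ℝ)⁻¹ • gx⟫ = ⟪α, z⟫ - 4⁻¹ * ⟪gx, α⟫ := by
    rw [inner_sub_right, real_inner_smul_right, real_inner_comm α gx]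
  have hz1 : ⟪α, z⟫ ≤ D α * F x z := hFY α z
  have hFgnn : 0 ≤ F x gx := hN.1 gx
  have hFznn : 0 ≤ F x z := hN.1 z
  have hqnn : q α = (D α) ^ 2 := rfl
  rw [hFy, hinner1, hga, hqnn]
  nlinarith [hFg, hz1, hD0 α, sq_nonneg (D α - 2 * F x z), sq_nonneg (F x gx), hFgnn, hFznn]

/-- Symmetric-difference estimate for the fiberwise gradient of the squared dual
norm of a strongly convex horizontally `C¹` family of asymmetric norms. -/
theorem grad_dual_sq_symmetric_difference {n : ℕ} (U Ut : Set (En n))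
    (hU : IsOpen U) (hUt : IsOpen Ut)
    (hcomp : IsCompact (closure U)) (hsub : closure U ⊆ Ut)
    (G : En n → En n → ℝ) (hG : SmoothFamily Ut G)
    (F : En n → En n → ℝ) (hF : HorizC1Family Ut F)
    (hsc : StronglyConvexFamilyWrt Ut F G)
    (g : En n → En n → En n)
    (hg : ∀ x ∈ Ut, ∀ α, HasGradientAt (fun β => (dualNormF F x β) ^ 2) (g x α) α) :
    ∃ C₄ > (0 : ℝ), ∀ x₁ ∈ U, ∀ x₂ ∈ U, ∀ α : En n,
      C₄ * ‖g x₁ α - g x₂ α‖ ^ 2 ≤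
        (F x₁ (g x₂ α)) ^ 2 + (F x₂ (g x₁ α)) ^ 2
          - (F x₁ (g x₁ α)) ^ 2 - (F x₂ (g x₂ α)) ^ 2 := by
  have hcF : ∀ x ∈ Ut, Continuous (F x) := by
    intro x hx
    rw [continuous_iff_continuousAt]
    intro y
    have h1 : ContinuousAt (fun p : En n × En n => F p.1 p.2) (x, y) :=
      hF.1.continuousAt ((hUt.prod isOpen_univ).mem_nhds
        (Set.mem_prod.mpr ⟨hx, Set.mem_univ y⟩))
    exact h1.comp ((continuous_const.prodMk continuous_id).continuousAt)
  rcases Set.eq_empty_or_nonempty U with rfl | hUne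
  · exact ⟨1, one_pos, by simp⟩
  rcases subsingleton_or_nontrivial (En n) with hsing | hnt
  · refine ⟨1, one_pos, ?_⟩
    intro x₁ hx₁ x₂ hx₂ α
    have hUt1 : x₁ ∈ Ut := hsub (subset_closure hx₁)
    have hUt2 : x₂ ∈ Ut := hsub (subset_closure hx₂)
    have h1 : g x₁ α = 0 := Subsingleton.elim _ _
    have h2 : g x₂ α = 0 := Subsingleton.elim _ _
    have hF10 : F x₁ 0 = 0 := ((hF.2.1 x₁ hUt1).2.1 0).mpr rfl
    have hF20 : F x₂ 0 = 0 := ((hF.2.1 x₂ hUt2).2.1 0).mpr rfl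
    simp [h1, h2, hF10, hF20]
  · set K := closure U ×ˢ Metric.sphere (0 : En n) 1 with hKdef
    have hKc : IsCompact K := hcomp.prod (isCompact_sphere 0 1)
    have hKne : K.Nonempty :=
      (hUne.closure).prod (NormedSpace.sphere_nonempty.mpr zero_le_one)
    have hKsub : K ⊆ Ut ×ˢ {y : En n | y ≠ 0} := by
      rintro ⟨x, y⟩ ⟨hx, hy⟩
      refine ⟨hsub hx, ?_⟩
      simp only [Set.mem_setOf_eq]
      intro h0
      rw [h0] at hy
      simp at hy
    have hGc : ContinuousOn (fun p : En n × En n => G p.1 p.2) K :=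
      (hG.2.continuousOn).mono hKsub
    obtain ⟨⟨x₀, y₀⟩, hmem, hmin⟩ := hKc.exists_isMinOn hKne hGc
    set c := G x₀ y₀ with hcdef
    have hx₀Ut : x₀ ∈ Ut := hsub hmem.1
    have hy₀ne : y₀ ≠ 0 := by
      have := hmem.2
      intro h0
      rw [h0] at this
      simp at this
    have hc : 0 < c := by
      have h1 := (hG.1 x₀ hx₀Ut).1 y₀
      have h2 : G x₀ y₀ ≠ 0 := fun h0 => hy₀ne (((hG.1 x₀ hx₀Ut).2.1 y₀).mp h0)
      exact lt_of_le_of_ne h1 (Ne.symm h2)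
    have hGlow : ∀ x ∈ closure U, ∀ v : En n, c * ‖v‖ ≤ G x v := by
      intro x hx v
      rcases eq_or_ne v 0 with rfl | hv
      · simpa using (hG.1 x (hsub hx)).1 0
      · have hvn : 0 < ‖v‖ := norm_pos_iff.mpr hv
        have hu : ‖v‖⁻¹ • v ∈ Metric.sphere (0 : En n) 1 := by
          simp [norm_smul, abs_of_pos (inv_pos.mpr hvn), inv_mul_cancel₀ hvn.ne']
        have hxu : (x, ‖v‖⁻¹ • v) ∈ K := Set.mk_mem_prod hx hu
        have h1 : c ≤ G x (‖v‖⁻¹ • v) := hmin hxu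
        have h2 : G x v = ‖v‖ * G x (‖v‖⁻¹ • v) := by
          rw [← (hG.1 x (hsub hx)).2.2.1 ‖v‖ hvn, smul_inv_smul₀ hvn.ne']
        have h3 : c * ‖v‖ ≤ G x (‖v‖⁻¹ • v) * ‖v‖ := mul_le_mul_of_nonneg_right h1 hvn.le
        rw [h2]
        linarith [h3]
    refine ⟨c ^ 2, by positivity, ?_⟩
    intro x₁ hx₁ x₂ hx₂ α
    have hcl1 : x₁ ∈ closure U := subset_closure hx₁
    have hcl2 : x₂ ∈ closure U := subset_closure hx₂
    have hUt1 : x₁ ∈ Ut := hsub hcl1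
    have hUt2 : x₂ ∈ Ut := hsub hcl2
    set g₁ := g x₁ α with hg₁def
    set g₂ := g x₂ α with hg₂def
    set y₁ := (4:ℝ)⁻¹ • g₁ with hy₁def
    set y₂ := (4:ℝ)⁻¹ • g₂ with hy₂def
    have hk₁ : α ∈ subdiffSqF F x₁ y₁ :=
      key_subdiff F x₁ (hF.2.1 x₁ hUt1) (hcF x₁ hUt1) α g₁ (hg x₁ hUt1 α)
    have hk₂ : α ∈ subdiffSqF F x₂ y₂ :=
      key_subdiff F x₂ (hF.2.1 x₂ hUt2) (hcF x₂ hUt2) α g₂ (hg x₂ hUt2 α)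
    have hs₁ := hsc x₁ hUt1 y₁ y₂ α hk₁
    have hs₂ := hsc x₂ hUt2 y₂ y₁ α hk₂
    have hin : ⟪α, y₂ - y₁⟫ + ⟪α, y₁ - y₂⟫ = 0 := by
      have h0 : (y₂ - y₁) + (y₁ - y₂) = 0 := by abel
      rw [← inner_add_right, h0, inner_zero_right]
    -- norms
    have hd21 : y₂ - y₁ = (4:ℝ)⁻¹ • (g₂ - g₁) := by rw [hy₁def, hy₂def, smul_sub]
    have hd12 : y₁ - y₂ = (4:ℝ)⁻¹ • (g₁ - g₂) := by rw [hy₁def, hy₂def, smul_sub]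
    have hn21 : ‖y₂ - y₁‖ = 4⁻¹ * ‖g₁ - g₂‖ := by
      rw [hd21, norm_smul, norm_sub_rev]
      norm_num
    have hn12 : ‖y₁ - y₂‖ = 4⁻¹ * ‖g₁ - g₂‖ := by
      rw [hd12, norm_smul]
      norm_num
    -- G lower bounds
    have hg₁' : c * (4⁻¹ * ‖g₁ - g₂‖) ≤ G x₁ (y₂ - y₁) := by
      have := hGlow x₁ hcl1 (y₂ - y₁)
      rwa [hn21] at this
    have hg₂' : c * (4⁻¹ * ‖g₁ - g₂‖) ≤ G x₂ (y₁ - y₂) := by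
      have := hGlow x₂ hcl2 (y₁ - y₂)
      rwa [hn12] at this
    have hlnn : (0:ℝ) ≤ c * (4⁻¹ * ‖g₁ - g₂‖) :=
      mul_nonneg hc.le (by positivity)
    have hG₁sq : (c * (4⁻¹ * ‖g₁ - g₂‖)) ^ 2 ≤ (G x₁ (y₂ - y₁)) ^ 2 :=
      pow_le_pow_left₀ hlnn hg₁' 2
    have hG₂sq : (c * (4⁻¹ * ‖g₁ - g₂‖)) ^ 2 ≤ (G x₂ (y₁ - y₂)) ^ 2 :=
      pow_le_pow_left₀ hlnn hg₂' 2
    -- scaling of F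
    have hFs : ∀ x ∈ Ut, ∀ v : En n, F x ((4:ℝ)⁻¹ • v) = 4⁻¹ * F x v :=
      fun x hx v => (hF.2.1 x hx).2.2.1 (4:ℝ)⁻¹ (by norm_num) v
    have e11 : (F x₁ y₁) ^ 2 = (4⁻¹) ^ 2 * (F x₁ g₁) ^ 2 := by
      rw [hy₁def, hFs x₁ hUt1 g₁]; ring
    have e12 : (F x₁ y₂) ^ 2 = (4⁻¹) ^ 2 * (F x₁ g₂) ^ 2 := by
      rw [hy₂def, hFs x₁ hUt1 g₂]; ring
    have e21 : (F x₂ y₁) ^ 2 = (4⁻¹) ^ 2 * (F x₂ g₁) ^ 2 := by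
      rw [hy₁def, hFs x₂ hUt2 g₁]; ring
    have e22 : (F x₂ y₂) ^ 2 = (4⁻¹) ^ 2 * (F x₂ g₂) ^ 2 := by
      rw [hy₂def, hFs x₂ hUt2 g₂]; ring
    linarith [hs₁, hs₂, hin, hG₁sq, hG₂sq, e11, e12, e21, e22,
      sq_nonneg (c * (4⁻¹ * ‖g₁ - g₂‖))]
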